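/- Let Σ be a finite alphabet, N ≥ 1, w1 ∈ Σ*, s ∈ Σ^+, w2 an ω-word over Σ, and M, M' natural numbers with M > 2^{N+1} and M' > 2^{N+1}. Then w1·s^M·w2 ≡_N w1·s^{M'}·w2. -/

import Mathlib

namespace Stmt1

variable {Γ : Type*}

/-- `m`-fold concatenation of a finite word. -/
def lpow (u : List Γ) : ℕ → List Γ
  | 0 => []
  | m + 1 => u ++ lpow u m

/-- Concatenation of a finite word with an ω-word. -/
def wcat (u : List Γ) (w : ℕ → Γ) : ℕ → Γ := fun n =>
  if h : n < u.length then u.get ⟨n, h⟩ else w (n - u.length)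

/-- Syntax of first-order logic `FO_Γ` over ω-words over `Γ`:
variables are natural numbers (interpreted as positions), atomic formulas are
`a(z)` for each letter `a`, `S(z,z')`, `z < z'` and `z = z'`,
closed under `¬`, `∧` and `∃`. -/
inductive FO (Γ : Type*) : Type _
  | letter : Γ → ℕ → FO Γ
  | succ : ℕ → ℕ → FO Γ
  | lt : ℕ → ℕ → FO Γ
  | eq : ℕ → ℕ → FO Γ
  | not : FO Γ → FO Γ
  | and : FO Γ → FO Γ → FO Γ
  | ex : ℕ → FO Γ → FO Γ

/-- Satisfaction of an FO formula on an ω-word under an assignment of variables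
to positions. -/
def FO.Sat (w : ℕ → Γ) : FO Γ → (ℕ → ℕ) → Prop
  | .letter a z, f => w (f z) = a
  | .succ z z', f => f z' = f z + 1
  | .lt z z', f => f z < f z'
  | .eq z z', f => f z = f z'
  | .not φ, f => ¬ FO.Sat w φ f
  | .and φ ψ, f => FO.Sat w φ f ∧ FO.Sat w ψ f
  | .ex z φ, f => ∃ pos : ℕ, FO.Sat w φ (Function.update f z pos)

/-- Quantifier height: maximal nesting depth of `∃`. -/
def FO.qh : FO Γ → ℕ
  | .letter _ _ => 0
  | .succ _ _ => 0
  | .lt _ _ => 0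
  | .eq _ _ => 0
  | .not φ => FO.qh φ
  | .and φ ψ => max (FO.qh φ) (FO.qh ψ)
  | .ex _ φ => FO.qh φ + 1

/-- Free variables of an FO formula. -/
def FO.free : FO Γ → Finset ℕ
  | .letter _ z => {z}
  | .succ z z' => {z, z'}
  | .lt z z' => {z, z'}
  | .eq z z' => {z, z'}
  | .not φ => FO.free φ
  | .and φ ψ => FO.free φ ∪ FO.free ψ
  | .ex z φ => (FO.free φ).erase z

/-- Satisfaction of a sentence (the assignment is irrelevant, so we fix one). -/
def FO.SatS (w : ℕ → Γ) (φ : FO Γ) : Prop := FO.Sat w φ fun _ => 0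

/-- `w ≡_n w'`: the two ω-words satisfy exactly the same FO sentences
of quantifier height at most `n`. -/
def FOEquiv (n : ℕ) (w w' : ℕ → Γ) : Prop :=
  ∀ φ : FO Γ, FO.free φ = ∅ → FO.qh φ ≤ n → (FO.SatS w φ ↔ FO.SatS w' φ)

/-! An Ehrenfeucht–Fraïssé argument. Duplicator maintains a set of matched pairs of positions of
the two words: the pebbles, every position of the common prefix `w1` matched with itself, and every
position of the common suffix `w2` matched with its shifted copy. Matched positions are congruent
modulo `|s|`, and two matched pairs either have the same offset or lie more than `g` apart in both
words, on the same side. Such a matching reads the same letters, and for `g ≥ 1` it respects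
successor and order. A new pebble close to a matched pair is answered with the same offset; a new
pebble far from every matched pair is answered just beyond `g` after the image of its left
neighbour, in the right residue class. One round thus turns the gap `2g + |s|` into `g`, so that
`g = (2^(k+1) - 1)|s|` suffices for `k` rounds, which `M, M' > 2^(N+1)` provide initially. -/

open Function

section Words

variable {Γ : Type*}

lemma wcat_of_lt {u : List Γ} {w : ℕ → Γ} {n : ℕ} (h : n < u.length) : wcat u w n = u[n] := by
  simp [wcat, h]

lemma wcat_length_add (u : List Γ) (w : ℕ → Γ) (t : ℕ) : wcat u w (u.length + t) = w t := by
  simp [wcat]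

lemma wcat_append (u₁ u₂ : List Γ) (w : ℕ → Γ) : wcat (u₁ ++ u₂) w = wcat u₁ (wcat u₂ w) := by
  funext n
  rcases lt_or_ge n u₁.length with h | h
  · rw [wcat_of_lt (by rw [List.length_append]; omega), wcat_of_lt h,
      List.getElem_append_left h]
  · obtain ⟨t, rfl⟩ := Nat.exists_eq_add_of_le h
    rw [wcat_length_add]
    rcases lt_or_ge t u₂.length with ht | ht
    · rw [wcat_of_lt (by rw [List.length_append]; omega), wcat_of_lt ht,
        List.getElem_append_right (by omega)]
      simp
    · obtain ⟨r, rfl⟩ := Nat.exists_eq_add_of_le ht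
      rw [wcat_length_add, ← add_assoc, ← List.length_append, wcat_length_add]

lemma length_lpow (u : List Γ) (m : ℕ) : (lpow u m).length = m * u.length := by
  induction m with
  | zero => simp [lpow]
  | succ m ih => simp [lpow, ih, Nat.succ_mul, add_comm]

lemma wcat_lpow_of_lt (s : List Γ) (w : ℕ → Γ) {m i : ℕ} (h : i < m * s.length) :
    wcat (lpow s m) w i = wcat s w (i % s.length) := by
  induction m generalizing i with
  | zero => simp at h
  | succ m ih =>
    rw [lpow, wcat_append]
    rcases lt_or_ge i s.length with hi | hi
    · rw [Nat.mod_eq_of_lt hi, wcat_of_lt hi, wcat_of_lt hi]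
    · obtain ⟨j, rfl⟩ := Nat.exists_eq_add_of_le hi
      rw [wcat_length_add, Nat.add_mod_left, ih (by rw [Nat.succ_mul] at h; omega)]

end Words

section BackAndForth

variable {Γ : Type*}

def IsPartialIso (u v : ℕ → Γ) (f f' : ℕ → ℕ) : Prop :=
  ∀ z z', u (f z) = v (f' z) ∧ (f z' = f z + 1 ↔ f' z' = f' z + 1) ∧
    (f z < f z' ↔ f' z < f' z') ∧ (f z = f z' ↔ f' z = f' z')

theorem FO.sat_iff_of_backAndForth {u v : ℕ → Γ} (I : ℕ → (ℕ → ℕ) → (ℕ → ℕ) → Prop)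
    (hiso : ∀ k f f', I k f f' → IsPartialIso u v f f')
    (forth : ∀ k f f', I (k + 1) f f' → ∀ z a, ∃ b, I k (update f z a) (update f' z b))
    (back : ∀ k f f', I (k + 1) f f' → ∀ z b, ∃ a, I k (update f z a) (update f' z b))
    (φ : FO Γ) :
    ∀ k f f', φ.qh ≤ k → I k f f' → (φ.Sat u f ↔ φ.Sat v f') := by
  induction φ with
  | letter c z => intro k f f' _ h; simp only [FO.Sat, (hiso k f f' h z z).1]
  | succ z z' => intro k f f' _ h; exact (hiso k f f' h z z').2.1
  | lt z z' => intro k f f' _ h; exact (hiso k f f' h z z').2.2.1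
  | eq z z' => intro k f f' _ h; exact (hiso k f f' h z z').2.2.2
  | not φ ih => intro k f f' hφ h; exact not_congr (ih k f f' hφ h)
  | and φ ψ ihφ ihψ =>
    intro k f f' hφψ h
    exact and_congr (ihφ k f f' (le_of_max_le_left hφψ) h) (ihψ k f f' (le_of_max_le_right hφψ) h)
  | ex z φ ih =>
    rintro (_ | k) f f' hφ h
    · exact absurd hφ (Nat.not_succ_le_zero _)
    have hφ : φ.qh ≤ k := Nat.le_of_succ_le_succ hφ
    constructor
    · rintro ⟨a, ha⟩
      obtain ⟨b, hb⟩ := forth k f f' h z a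
      exact ⟨b, (ih k _ _ hφ hb).1 ha⟩
    · rintro ⟨b, hb⟩
      obtain ⟨a, ha⟩ := back k f f' h z b
      exact ⟨a, (ih k _ _ hφ ha).2 hb⟩

theorem FOEquiv.of_backAndForth {u v : ℕ → Γ} (I : ℕ → (ℕ → ℕ) → (ℕ → ℕ) → Prop)
    (hiso : ∀ k f f', I k f f' → IsPartialIso u v f f')
    (forth : ∀ k f f', I (k + 1) f f' → ∀ z a, ∃ b, I k (update f z a) (update f' z b))
    (back : ∀ k f f', I (k + 1) f f' → ∀ z b, ∃ a, I k (update f z a) (update f' z b))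
    (n : ℕ) (h : I n (fun _ => 0) (fun _ => 0)) : FOEquiv n u v :=
  fun φ _ hφ => FO.sat_iff_of_backAndForth I hiso forth back φ n _ _ hφ h

end BackAndForth

section GapMatching

def Compatible (g : ℕ) (x y : ℕ × ℕ) : Prop :=
  x.2 + y.1 = x.1 + y.2 ∨ (x.1 + g < y.1 ∧ x.2 + g < y.2) ∨ (y.1 + g < x.1 ∧ y.2 + g < x.2)

def IsGapMatching (p g : ℕ) (R : Set (ℕ × ℕ)) : Prop :=
  (∀ x ∈ R, x.1 ≡ x.2 [MOD p]) ∧ ∀ x ∈ R, ∀ y ∈ R, Compatible g x y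

variable {p g : ℕ} {R : Set (ℕ × ℕ)}

lemma IsGapMatching.mono {g' : ℕ} {R' : Set (ℕ × ℕ)} (h : IsGapMatching p g R) (hg : g' ≤ g)
    (hR : R' ⊆ R) : IsGapMatching p g' R' := by
  refine ⟨fun x hx => h.1 x (hR hx), fun x hx y hy => ?_⟩
  have := h.2 x (hR hx) y (hR hy)
  simp only [Compatible] at *
  omega

lemma IsGapMatching.swap (h : IsGapMatching p g R) : IsGapMatching p g (Prod.swap ⁻¹' R) := by
  refine ⟨fun x hx => (h.1 _ hx).symm, fun x hx y hy => ?_⟩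
  have := h.2 _ hx _ hy
  simp only [Compatible] at *
  simp only [Prod.fst_swap, Prod.snd_swap] at this
  omega

lemma IsGapMatching.insert_of_compatible {a b : ℕ} (h : IsGapMatching p g R) (hab : a ≡ b [MOD p])
    (hc : ∀ y ∈ R, Compatible g (a, b) y) : IsGapMatching p g (insert (a, b) R) := by
  refine ⟨Set.forall_mem_insert.2 ⟨hab, h.1⟩, Set.forall_mem_insert.2
    ⟨Set.forall_mem_insert.2 ⟨Or.inl (add_comm _ _), hc⟩,
      fun x hx => Set.forall_mem_insert.2 ⟨?_, h.2 x hx⟩⟩⟩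
  have := hc x hx
  simp only [Compatible] at *
  omega

lemma exists_mem_Ioc_modEq (hp : 0 < p) (a c : ℕ) : ∃ b ∈ Set.Ioc c (c + p), a ≡ b [MOD p] := by
  have hc : c + 1 ≤ p * (c + 1) := Nat.le_mul_of_pos_left _ hp
  refine ⟨c + 1 + (a + p * (c + 1) - (c + 1)) % p,
    ⟨by omega, by have := Nat.mod_lt (a + p * (c + 1) - (c + 1)) hp; omega⟩, ?_⟩
  calc a ≡ a + p * (c + 1) [MOD p] := by simp [Nat.ModEq]
    _ = c + 1 + (a + p * (c + 1) - (c + 1)) := by omega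
    _ ≡ c + 1 + (a + p * (c + 1) - (c + 1)) % p [MOD p] := (Nat.mod_modEq _ _).symm.add_left _

lemma exists_compatible_of_near {a : ℕ} {x : ℕ × ℕ} (h : IsGapMatching p (2 * g + p) R)
    (h0 : (0, 0) ∈ R) (hx : x ∈ R) (hxa : x.1 ≤ a + (g + p)) (hax : a ≤ x.1 + (g + p)) :
    ∃ b, a ≡ b [MOD p] ∧ ∀ y ∈ R, Compatible g (a, b) y := by
  have hx0 := h.2 _ h0 _ hx
  simp only [Compatible] at hx0
  refine ⟨x.2 + a - x.1, ?_, fun y hy => ?_⟩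
  · refine Nat.ModEq.add_right_cancel' x.1 ?_
    calc a + x.1 ≡ a + x.2 [MOD p] := (h.1 x hx).add_left a
      _ = x.2 + a - x.1 + x.1 := by omega
  · have := h.2 _ hx _ hy
    simp only [Compatible] at *
    omega

lemma exists_compatible_of_far {a : ℕ} {x : ℕ × ℕ} (hp : 0 < p) (h : IsGapMatching p (2 * g + p) R)
    (hx : x ∈ R) (hxa : x.1 < a) (hmax : ∀ y ∈ R, y.1 < a → y.1 ≤ x.1)
    (hfar : ∀ y ∈ R, y.1 + (g + p) < a ∨ a + (g + p) < y.1) :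
    ∃ b, a ≡ b [MOD p] ∧ ∀ y ∈ R, Compatible g (a, b) y := by
  obtain ⟨b, ⟨hb, hb'⟩, hab⟩ := exists_mem_Ioc_modEq hp a (x.2 + g)
  refine ⟨b, hab, fun y hy => ?_⟩
  have hxy := h.2 _ hx _ hy
  have := hfar x hx
  have := hfar y hy
  simp only [Compatible] at *
  rcases lt_or_ge y.1 a with hya | hya
  · have := hmax y hy hya
    omega
  · omega

lemma exists_max_fst_lt {a : ℕ} (h0 : (0, 0) ∈ R) (ha : 0 < a) :
    ∃ x ∈ R, x.1 < a ∧ ∀ y ∈ R, y.1 < a → y.1 ≤ x.1 := by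
  classical
  let P n := ∃ y ∈ R, y.1 = n
  obtain ⟨x, hx, hxn⟩ := Nat.findGreatest_spec (P := P) (Nat.zero_le (a - 1)) ⟨(0, 0), h0, rfl⟩
  refine ⟨x, hx, ?_, fun y hy hya => ?_⟩
  · have := Nat.findGreatest_le (P := P) (a - 1)
    omega
  · rw [hxn]
    exact Nat.le_findGreatest (by omega) ⟨y, hy, rfl⟩

lemma IsGapMatching.exists_insert (hp : 0 < p) (h : IsGapMatching p (2 * g + p) R)
    (h0 : (0, 0) ∈ R) (a : ℕ) : ∃ b, IsGapMatching p g (insert (a, b) R) := by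
  suffices ∃ b, a ≡ b [MOD p] ∧ ∀ y ∈ R, Compatible g (a, b) y by
    obtain ⟨b, hab, hc⟩ := this
    exact ⟨b, (h.mono (by omega) le_rfl).insert_of_compatible hab hc⟩
  by_cases hnear : ∃ x ∈ R, x.1 ≤ a + (g + p) ∧ a ≤ x.1 + (g + p)
  · obtain ⟨x, hx, hxa, hax⟩ := hnear
    exact exists_compatible_of_near h h0 hx hxa hax
  · push Not at hnear
    have hfar : ∀ y ∈ R, y.1 + (g + p) < a ∨ a + (g + p) < y.1 := fun y hy => by
      have := hnear y hy
      omega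
    obtain ⟨x, hx, hxa, hmax⟩ := exists_max_fst_lt h0 (a := a) (by have := hfar _ h0; omega)
    exact exists_compatible_of_far hp h hx hxa hmax hfar

end GapMatching

section Stuttering

/-- The positions `≤ L` of the common prefix matched with themselves, and the common suffix starting
at `A` in one word matched with the one starting at `A'` in the other. -/
def anchors (L A A' : ℕ) : Set (ℕ × ℕ) :=
  {x | x.1 ≤ L ∧ x.2 = x.1} ∪ Set.range fun t => (A + t, A' + t)

def pebbles (f f' : ℕ → ℕ) : Set (ℕ × ℕ) := Set.range fun z => (f z, f' z)

variable {p g L A A' : ℕ} {f f' : ℕ → ℕ}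

lemma pebbles_update_subset (z a b : ℕ) :
    pebbles (update f z a) (update f' z b) ⊆ insert (a, b) (pebbles f f') := by
  rintro _ ⟨y, rfl⟩
  by_cases hy : y = z
  · subst hy
    simp
  · simp only [update_of_ne hy]
    exact Or.inr ⟨y, rfl⟩

lemma preimage_swap_pebbles_union_anchors :
    Prod.swap ⁻¹' (pebbles f f' ∪ anchors L A A') = pebbles f' f ∪ anchors L A' A := by
  ext ⟨a, b⟩
  simp only [pebbles, anchors, Set.mem_preimage, Prod.swap_prod_mk, Set.mem_union,
    Set.mem_range, Set.mem_ofPred_eq, Prod.mk.injEq]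
  constructor <;> rintro (⟨z, h, h'⟩ | ⟨hL, rfl⟩ | ⟨t, h, h'⟩)
  all_goals first
    | exact Or.inl ⟨z, h', h⟩
    | exact Or.inr (Or.inl ⟨hL, rfl⟩)
    | exact Or.inr (Or.inr ⟨t, h', h⟩)

lemma IsGapMatching.forth (hp : 0 < p)
    (h : IsGapMatching p (2 * g + p) (pebbles f f' ∪ anchors L A A')) (z a : ℕ) :
    ∃ b, IsGapMatching p g (pebbles (update f z a) (update f' z b) ∪ anchors L A A') := by
  obtain ⟨b, hb⟩ := h.exists_insert hp (Or.inr (Or.inl ⟨Nat.zero_le L, rfl⟩)) a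
  refine ⟨b, hb.mono le_rfl ?_⟩
  rw [← Set.insert_union]
  exact Set.union_subset_union_left _ (pebbles_update_subset z a b)

lemma IsGapMatching.back (hp : 0 < p)
    (h : IsGapMatching p (2 * g + p) (pebbles f f' ∪ anchors L A A')) (z b : ℕ) :
    ∃ a, IsGapMatching p g (pebbles (update f z a) (update f' z b) ∪ anchors L A A') := by
  obtain ⟨a, ha⟩ := (preimage_swap_pebbles_union_anchors ▸ h.swap).forth hp z b
  exact ⟨a, preimage_swap_pebbles_union_anchors ▸ ha.swap⟩

variable {Γ : Type*} {w1 s : List Γ} {w2 : ℕ → Γ} {M M' : ℕ}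

lemma wcat_lpow_eq_of_compatible {a b : ℕ} (hab : a ≡ b [MOD s.length])
    (hc : ∀ y ∈ anchors w1.length (w1.length + M * s.length) (w1.length + M' * s.length),
      Compatible 0 (a, b) y) :
    wcat (w1 ++ lpow s M) w2 a = wcat (w1 ++ lpow s M') w2 b := by
  set L := w1.length
  set p := s.length
  rw [wcat_append, wcat_append]
  rcases lt_or_ge a L with ha | ha
  · obtain rfl : b = a := by
      have := hc (a, a) (Or.inl ⟨ha.le, rfl⟩)
      simp only [Compatible] at this
      omega
    rw [wcat_of_lt ha, wcat_of_lt ha]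
  have hL := hc (L, L) (Or.inl ⟨le_rfl, rfl⟩)
  obtain ⟨i, rfl⟩ := Nat.exists_eq_add_of_le ha
  obtain ⟨j, rfl⟩ : ∃ j, b = L + j := Nat.exists_eq_add_of_le (by simp only [Compatible] at hL; omega)
  rw [wcat_length_add, wcat_length_add]
  rcases lt_or_ge i (M * p) with hi | hi
  · have hj : j < M' * p := by
      have := hc _ (Or.inr ⟨0, rfl⟩)
      simp only [Compatible] at this
      omega
    rw [wcat_lpow_of_lt s w2 hi, wcat_lpow_of_lt s w2 hj, Nat.ModEq.add_left_cancel' L hab]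
  · obtain ⟨t, rfl⟩ := Nat.exists_eq_add_of_le hi
    obtain rfl : j = M' * p + t := by
      have := hc _ (Or.inr ⟨t, rfl⟩)
      simp only [Compatible] at this
      omega
    rw [← length_lpow, wcat_length_add, ← length_lpow, wcat_length_add]

lemma IsGapMatching.isPartialIso (hg : 1 ≤ g) (h : IsGapMatching s.length g
      (pebbles f f' ∪ anchors w1.length (w1.length + M * s.length) (w1.length + M' * s.length))) :
    IsPartialIso (wcat (w1 ++ lpow s M) w2) (wcat (w1 ++ lpow s M') w2) f f' := by
  intro z z'
  have hzz' := h.2 _ (Or.inl ⟨z, rfl⟩) _ (Or.inl ⟨z', rfl⟩)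
  refine ⟨wcat_lpow_eq_of_compatible (h.1 _ (Or.inl ⟨z, rfl⟩)) fun y hy => ?_, ?_⟩
  · exact (h.mono (Nat.zero_le g) le_rfl).2 _ (Or.inl ⟨z, rfl⟩) _ (Or.inr hy)
  · simp only [Compatible] at hzz'
    omega

lemma isGapMatching_anchors (hA : L + g < A) (hA' : L + g < A') (hAA' : A ≡ A' [MOD p]) :
    IsGapMatching p g (anchors L A A') := by
  constructor
  · rintro _ (⟨-, h⟩ | ⟨t, rfl⟩)
    · exact h ▸ rfl
    · exact hAA'.add_right t
  · rintro _ (⟨hx, hx'⟩ | ⟨t, rfl⟩) _ (⟨hy, hy'⟩ | ⟨t', rfl⟩) <;> simp only [Compatible] <;> omega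

end Stuttering

theorem stuttering_fo'_general {Γ : Type*} (N : ℕ)
    (w1 s : List Γ) (hs : s ≠ []) (w2 : ℕ → Γ) (M M' : ℕ)
    (hM : 2 ^ (N + 1) < M) (hM' : 2 ^ (N + 1) < M') :
    FOEquiv N (wcat (w1 ++ lpow s M) w2) (wcat (w1 ++ lpow s M') w2) := by
  set L := w1.length
  set p := s.length
  have hp : 0 < p := List.length_pos_iff.mpr hs
  let gap k := (2 ^ (k + 1) - 1) * p
  have hgap k : gap (k + 1) = 2 * gap k + p := by
    show (2 ^ (k + 1 + 1) - 1) * p = 2 * ((2 ^ (k + 1) - 1) * p) + p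
    zify [Nat.one_le_two_pow (n := k + 1), Nat.one_le_two_pow (n := k + 1 + 1)]
    ring
  have hgap_pos k : 1 ≤ gap k := Nat.mul_pos (by have := Nat.one_lt_two_pow (n := k + 1); omega) hp
  have hgap_lt {m} (hm : 2 ^ (N + 1) < m) : L + gap N < L + m * p :=
    Nat.add_lt_add_left (Nat.mul_lt_mul_of_pos_right (Nat.sub_lt_of_lt hm) hp) L
  refine FOEquiv.of_backAndForth
    (fun k f f' => IsGapMatching p (gap k) (pebbles f f' ∪ anchors L (L + M * p) (L + M' * p)))
    (fun k _ _ h => h.isPartialIso (hgap_pos k)) (fun k _ _ h => (hgap k ▸ h).forth hp)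
    (fun k _ _ h => (hgap k ▸ h).back hp) N ?_
  refine (isGapMatching_anchors (hgap_lt hM) (hgap_lt hM') ?_).mono le_rfl ?_
  · simp [Nat.ModEq, Nat.add_mul_mod_self_right]
  · rintro _ (⟨z, rfl⟩ | hx)
    exacts [Or.inl ⟨Nat.zero_le L, rfl⟩, hx]

/-- Stuttering theorem for FO: if `M, M' > 2^(N+1)` then
`w1 · s^M · w2 ≡_N w1 · s^(M') · w2`. -/
theorem stuttering_fo' {Γ : Type*} [Fintype Γ] (N : ℕ) (hN : 1 ≤ N)
    (w1 s : List Γ) (hs : s ≠ []) (w2 : ℕ → Γ) (M M' : ℕ)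
    (hM : 2 ^ (N + 1) < M) (hM' : 2 ^ (N + 1) < M') :
    FOEquiv N (wcat (w1 ++ lpow s M) w2) (wcat (w1 ++ lpow s M') w2) :=
  stuttering_fo'_general N w1 s hs w2 M M' hM hM'

end Stmt1
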